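/- For every n ∈ ℕ: cl(E_n) ∩ (Z × Z) = ⋃_{g ∈ Γ, |g|_S ≤ n} {(η, σ̄(g)(η)) : η ∈ Z}, and the sets {(η, σ̄(g)(η)) : η ∈ Z} appearing in this union are pairwise disjoint for distinct g. -/

import Mathlib

/-!
Every `η ∈ Z` concentrates on points of `Y` in components of large index, where `σ` is
multiplicative and free. Hence `σ̄` restricts to an action of `Γ` on `Z`, and this action is free:
a permutation of a finite set can be coloured with three colours so that every moved point
changes colour, while an ultrafilter fixed by a map lives on a single colour class.

A pair `(η, ζ)` in `cl(E_n)` is approximated by pairs `(a, b)` with `d a b ≤ n`; far out these lie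
in one component, so `b = τ(w) a` for one of the finitely many words `w` of length `≤ n`, and an
ultrafilter argument yields a single word with `ζ = τ̄(w) η`. On `Y`, far out, `τ(w)` agrees with
`σ(pihom w)`, and `|pihom w|_S ≤ |w|`. Conversely, `σ(g)` moves points by at most the length of a
word for `g`, which gives the reverse inclusion.
-/

open scoped BigOperators symmDiff Classical

universe u v

/-- A sofic approximation of a group `Γ` generated by a finite symmetric set `S`. -/
structure SoficApprox (Γ : Type u) [Group Γ] (S : Finset Γ) where
  F : ℕ → Finset Γ
  F_mono : Monotone F
  F_one : ∀ i, (1 : Γ) ∈ F i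
  F_exhausts : ∀ g : Γ, ∃ i, g ∈ F i
  eps : ℕ → ℝ
  eps_pos : ∀ i, 0 < eps i
  eps_lim : Filter.Tendsto eps Filter.atTop (nhds 0)
  X : ℕ → Type
  finX : ∀ i, Finite (X i)
  neX : ∀ i, Nonempty (X i)
  sigma : (i : ℕ) → Γ → Equiv.Perm (X i)
  Y : (i : ℕ) → Set (X i)
  Y_large : ∀ i, (1 - eps i) * (Nat.card (X i) : ℝ) ≤ ((Y i).ncard : ℝ)
  sigma_mul : ∀ i, ∀ g ∈ F i, ∀ h ∈ F i, ∀ y ∈ Y i, sigma i g (sigma i h y) = sigma i (g * h) y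
  sigma_free : ∀ i, ∀ g ∈ F i, g ≠ 1 → ∀ y ∈ Y i, sigma i g y ≠ y

namespace SoficApprox

variable {Γ : Type u} [Group Γ] {S : Finset Γ}

/-- The total space (space of graphs) `X = ⨆ i, X i`. -/
abbrev Total (A : SoficApprox Γ S) : Type := Σ i, A.X i

/-- The bijection `σ(g)` of the total space acting as `σ_i(g)` on each `X i`. -/
def perm (A : SoficApprox Γ S) (g : Γ) : Equiv.Perm A.Total :=
  Equiv.sigmaCongrRight fun i => A.sigma i g

/-- The continuous extension `σ̄(g)` of `σ(g)` to the Stone–Čech compactification. -/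
def permBar (A : SoficApprox Γ S) (g : Γ) : Ultrafilter A.Total → Ultrafilter A.Total :=
  Ultrafilter.map (A.perm g)

/-- The union `Y = ⨆ i, Y i` inside the total space. -/
def Ytot (A : SoficApprox Γ S) : Set A.Total := {p | p.2 ∈ A.Y p.1}

/-- `∂Y`: free ultrafilters containing `Y`. -/
def bdY (A : SoficApprox Γ S) : Set (Ultrafilter A.Total) :=
  {η | (∀ p : A.Total, η ≠ pure p) ∧ A.Ytot ∈ η}

/-- The core `Z = ⋂_{g ∈ Γ} σ̄(g)''(∂Y)` of the sofic boundary. -/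
def core (A : SoficApprox Γ S) : Set (Ultrafilter A.Total) :=
  ⋂ g : Γ, A.permBar g '' A.bdY

/-- The `S`-labelled graph structure on `X i`, with edges `{x, σ_i(s)(x)}` for `s ∈ S`. -/
def graph (A : SoficApprox Γ S) (i : ℕ) : SimpleGraph (A.X i) where
  Adj x y := x ≠ y ∧ ∃ s ∈ S, A.sigma i s x = y ∨ A.sigma i s y = x
  symm := ⟨fun x y h => ⟨h.1.symm, by obtain ⟨s, hs, h'⟩ := h.2; exact ⟨s, hs, h'.symm⟩⟩⟩
  loopless := ⟨fun x h => h.1 rfl⟩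

/-- An admissible metric on the total space: a metric restricting to the edge-path
metric on each `X i` and with distances between distinct components tending to `∞`. -/
def Admissible (A : SoficApprox Γ S) (d : A.Total → A.Total → ℝ) : Prop :=
  (∀ p q, d p q = d q p) ∧
  (∀ p q r, d p r ≤ d p q + d q r) ∧
  (∀ p q, d p q = 0 ↔ p = q) ∧
  (∀ p q, 0 ≤ d p q) ∧
  (∀ (i : ℕ) (x y : A.X i), d ⟨i, x⟩ ⟨i, y⟩ = ((A.graph i).dist x y : ℝ)) ∧
  (∀ R : ℝ, ∃ N : ℕ, ∀ i j : ℕ, i ≠ j → N ≤ i + j →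
      ∀ (x : A.X i) (y : A.X j), R < d ⟨i, x⟩ ⟨j, y⟩)

/-- The entourage `E_R` viewed inside `βX × βX`. -/
def ER (A : SoficApprox Γ S) (d : A.Total → A.Total → ℝ) (R : ℝ) :
    Set (Ultrafilter A.Total × Ultrafilter A.Total) :=
  {p | ∃ a b : A.Total, d a b ≤ R ∧ p = (pure a, pure b)}

end SoficApprox

/-- Word length of `g` with respect to the generating set `S`. -/
noncomputable def wordLength {Γ : Type u} [Group Γ] (S : Finset Γ) (g : Γ) : ℕ :=
  sInf {n | ∃ l : List Γ, (∀ x ∈ l, x ∈ S) ∧ l.length = n ∧ l.prod = g}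

/-- Word length of an element of a free group. -/
noncomputable def fgLength {α : Type v} (w : FreeGroup α) : ℕ :=
  sInf {n | ∃ l : List (α × Bool), l.length = n ∧ FreeGroup.mk l = w}

/-- The canonical homomorphism `F_S → Γ` extending the inclusion `S ↪ Γ`. -/
noncomputable def pihom {Γ : Type u} [Group Γ] (S : Finset Γ) : FreeGroup ↥S →* Γ :=
  FreeGroup.lift fun s => (s : Γ)

/-- The homomorphism `τ : F_S → Sym(X)` with `τ(s) = σ(s)` for `s ∈ S`. -/
noncomputable def SoficApprox.tau {Γ : Type u} [Group Γ] {S : Finset Γ}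
    (A : SoficApprox Γ S) : FreeGroup ↥S →* Equiv.Perm A.Total :=
  FreeGroup.lift fun s => A.perm (s : Γ)

open Filter Topology

namespace Ultrafilter

variable {α β : Type*}

theorem hasBasis_nhds (η : Ultrafilter α) :
    (𝓝 η).HasBasis (· ∈ η) fun s => {u : Ultrafilter α | s ∈ u} := by
  refine ultrafilterBasis_is_basis.nhds_hasBasis.to_hasBasis ?_ ?_
  · rintro _ ⟨⟨s, rfl⟩, hη⟩
    exact ⟨s, hη, subset_rfl⟩
  · exact fun s hs => ⟨_, ⟨⟨s, rfl⟩, hs⟩, subset_rfl⟩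

def pureRel (r : α → α → Prop) : Set (Ultrafilter α × Ultrafilter α) :=
  {p | ∃ a b, r a b ∧ p = (pure a, pure b)}

theorem mem_closure_pureRel_iff {r : α → α → Prop} {η ζ : Ultrafilter α} :
    (η, ζ) ∈ closure (pureRel r) ↔ ∀ s ∈ η, ∀ t ∈ ζ, ∃ a ∈ s, ∃ b ∈ t, r a b := by
  rw [mem_closure_iff_nhds_basis ((hasBasis_nhds η).prod_nhds (hasBasis_nhds ζ))]
  constructor
  · intro h s hs t ht
    obtain ⟨_, ⟨a, b, hab, rfl⟩, ha, hb⟩ := h (s, t) ⟨hs, ht⟩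
    exact ⟨a, ha, b, hb, hab⟩
  · rintro h ⟨s, t⟩ ⟨hs, ht⟩
    obtain ⟨a, ha, b, hb, hab⟩ := h s hs t ht
    exact ⟨_, ⟨a, b, hab, rfl⟩, ha, hb⟩

theorem map_mem_closure_pureRel {r : α → α → Prop} {η : Ultrafilter α} {f : α → α}
    (h : ∀ᶠ a in η, r a (f a)) : (η, map f η) ∈ closure (pureRel r) :=
  mem_closure_pureRel_iff.2 fun _ hs _ ht =>
    let ⟨a, har, has, hat⟩ := (h.and (inter_mem hs ht)).exists
    ⟨a, has, f a, hat, har⟩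

theorem exists_map_eq_of_mem_closure_pureRel {ι : Type*} [Finite ι] (f : ι → α → α)
    {r : α → α → Prop} {η ζ : Ultrafilter α} (h : (η, ζ) ∈ closure (pureRel r))
    (hr : ∀ᶠ a in η, ∀ b, r a b → ∃ w, f w a = b) : ∃ w, map (f w) η = ζ := by
  by_contra! hne
  have hsep : ∀ w, ∃ t ∈ ζ, t ∉ map (f w) η := fun w => by
    by_contra! hle
    exact hne w (eq_of_le fun t ht => hle t ht)
  choose t htζ htf using hsep
  have hs : ∀ᶠ a in η, ∀ w, f w a ∉ t w :=
    eventually_all.2 fun w => compl_mem_iff_notMem.2 (htf w)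
  obtain ⟨a, ⟨haw, hat⟩, b, hb, hab⟩ :=
    mem_closure_pureRel_iff.1 h _ (hr.and hs) _ ((iInter_mem (f := (ζ : Filter α))).2 htζ)
  obtain ⟨w, rfl⟩ := haw b hab
  exact hat w (Set.mem_iInter.1 hb w)

theorem map_ne_self_of_eventually_ne {η : Ultrafilter α} {f : α → α} (c : α → β) [Finite β]
    (h : ∀ᶠ a in η, c (f a) ≠ c a) : map f η ≠ η := by
  intro hfix
  obtain ⟨k, hk⟩ := (map c η).eq_pure_of_finite
  have hck : ∀ᶠ a in η, c a = k :=
    show c ⁻¹' {k} ∈ η by rw [← mem_map, hk]; exact Set.mem_singleton k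
  have hcfk : ∀ᶠ a in η, c (f a) = k := by
    rw [← hfix] at hck
    exact hck
  obtain ⟨a, hne, ha, hfa⟩ := (h.and (hck.and hcfk)).exists
  exact hne (hfa.trans ha.symm)

theorem map_congr {η : Ultrafilter α} {f g : α → β} (h : f =ᶠ[η] g) : map f η = map g η :=
  coe_injective (by simp only [coe_map, Filter.map_congr h])

end Ultrafilter

theorem Equiv.Perm.exists_fin_three_coloring {α : Type*} [Finite α] (π : Equiv.Perm α) :
    ∃ c : α → Fin 3, ∀ x, π x ≠ x → c (π x) ≠ c x := by
  classical
  have := Fintype.ofFinite α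
  suffices ∀ s : Finset α, ∃ c : α → Fin 3, ∀ x ∈ s, π x ∈ s → π x ≠ x → c (π x) ≠ c x by
    obtain ⟨c, hc⟩ := this Finset.univ
    exact ⟨c, fun x => hc x (Finset.mem_univ _) (Finset.mem_univ _)⟩
  intro s
  induction s using Finset.induction_on with
  | empty => exact ⟨fun _ => 0, by simp⟩
  | insert a s _ ih =>
    obtain ⟨c, hc⟩ := ih
    -- `a` has at most the two neighbours `π a` and `π⁻¹ a`, so one of three colours is free
    obtain ⟨k, hk₁, hk₂⟩ : ∃ k : Fin 3, k ≠ c (π a) ∧ k ≠ c (π.symm a) := by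
      generalize c (π a) = u; generalize c (π.symm a) = v; revert u v; decide
    refine ⟨Function.update c a k, fun x hx hπx hne => ?_⟩
    rw [Finset.mem_insert] at hx hπx
    by_cases hxa : x = a
    · subst hxa
      simp [hne, hk₁.symm]
    · by_cases hπa : π x = a
      · have : x = π.symm a := by rw [← hπa, Equiv.symm_apply_apply]
        simp [hπa, hxa, this ▸ hk₂]
      · simpa [Function.update_apply, hπa, hxa] using
          hc x (hx.resolve_left hxa) (hπx.resolve_left hπa) hne

section WordLength

variable {Γ : Type u} [Group Γ] {S : Finset Γ}

theorem exists_list_prod_eq_pihom_mk (hSsymm : ∀ s ∈ S, s⁻¹ ∈ S) (l : List (↥S × Bool)) :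
    ∃ m : List Γ, (∀ x ∈ m, x ∈ S) ∧ m.length = l.length ∧ m.prod = pihom S (FreeGroup.mk l) := by
  refine ⟨l.map fun a => cond a.2 (a.1 : Γ) (a.1 : Γ)⁻¹, ?_, List.length_map _,
    by simp only [pihom, FreeGroup.lift_mk]⟩
  rintro _ hx
  obtain ⟨⟨⟨s, hs⟩, b⟩, -, rfl⟩ := List.mem_map.1 hx
  cases b
  exacts [hSsymm s hs, hs]

theorem wordLength_pihom_mk_le (hSsymm : ∀ s ∈ S, s⁻¹ ∈ S) (l : List (↥S × Bool)) :
    wordLength S (pihom S (FreeGroup.mk l)) ≤ l.length :=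
  Nat.sInf_le (exists_list_prod_eq_pihom_mk hSsymm l)

theorem pihom_surjective (hSgen : Subgroup.closure (S : Set Γ) = ⊤) :
    Function.Surjective (pihom S) :=
  FreeGroup.lift_surjective_iff_closure_range_eq_top.2 (by rwa [Subtype.range_coe_subtype])

theorem exists_mk_length_eq_wordLength (hSsymm : ∀ s ∈ S, s⁻¹ ∈ S)
    (hSgen : Subgroup.closure (S : Set Γ) = ⊤) (g : Γ) :
    ∃ l : List (↥S × Bool), l.length = wordLength S g ∧ pihom S (FreeGroup.mk l) = g := by
  have hne : {n | ∃ m : List Γ, (∀ x ∈ m, x ∈ S) ∧ m.length = n ∧ m.prod = g}.Nonempty := by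
    obtain ⟨w, rfl⟩ := pihom_surjective hSgen g
    obtain ⟨m, hmS, -, hm⟩ := exists_list_prod_eq_pihom_mk hSsymm w.toWord
    exact ⟨m.length, m, hmS, rfl, by rw [hm, FreeGroup.mk_toWord]⟩
  obtain ⟨m, hmS, hmlen, hmg⟩ := Nat.sInf_mem hne
  refine ⟨m.pmap (fun x hx => ((⟨x, hx⟩ : ↥S), true)) hmS, by rw [List.length_pmap, hmlen]; rfl, ?_⟩
  simp [pihom, FreeGroup.lift_mk, List.map_pmap, hmg]

end WordLength

namespace SoficApprox

variable {Γ : Type u} [Group Γ] {S : Finset Γ} (A : SoficApprox Γ S)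

theorem perm_mk (g : Γ) (i : ℕ) (x : A.X i) : A.perm g ⟨i, x⟩ = ⟨i, A.sigma i g x⟩ := rfl

def tailY : Filter A.Total := comap Sigma.fst atTop ⊓ 𝓟 A.Ytot

theorem eventually_mem_F (g : Γ) : ∀ᶠ p in A.tailY, g ∈ A.F p.1 := by
  obtain ⟨N, hN⟩ := A.F_exhausts g
  exact ((eventually_atTop.2 ⟨N, fun i hi => A.F_mono hi hN⟩).comap Sigma.fst).filter_mono
    inf_le_left

theorem eventually_mem_Ytot : ∀ᶠ p in A.tailY, p ∈ A.Ytot :=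
  mem_inf_of_right (mem_principal_self _)

theorem eventually_perm_mul (g h : Γ) :
    ∀ᶠ p in A.tailY, A.perm g (A.perm h p) = A.perm (g * h) p := by
  filter_upwards [A.eventually_mem_F g, A.eventually_mem_F h, A.eventually_mem_Ytot]
    with ⟨i, y⟩ hg hh hy
  exact congrArg (Sigma.mk i) (A.sigma_mul i g hg h hh y hy)

theorem eventually_perm_one : ∀ᶠ p in A.tailY, A.perm 1 p = p := by
  filter_upwards [A.eventually_perm_mul 1 1] with p hp
  exact (A.perm 1).injective (by rw [hp, one_mul])

theorem eventually_perm_ne {k : Γ} (hk : k ≠ 1) : ∀ᶠ p in A.tailY, A.perm k p ≠ p := by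
  filter_upwards [A.eventually_mem_F k, A.eventually_mem_Ytot] with ⟨i, y⟩ hkF hy hfix
  exact A.sigma_free i k hkF hk y hy (sigma_mk_injective hfix)

theorem le_tailY_of_mem_bdY {η : Ultrafilter A.Total} (hη : η ∈ A.bdY) : ↑η ≤ A.tailY := by
  have hfin : ∀ i, Finite (Sigma.fst ⁻¹' {i} : Set A.Total) := fun i =>
    have := A.finX i
    ((Set.finite_range (Sigma.mk i)).subset (by rintro ⟨j, x⟩ rfl; exact ⟨x, rfl⟩)).to_subtype
  have hcof : (η : Filter A.Total) ≤ cofinite :=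
    η.le_cofinite_or_eq_pure.resolve_right fun ⟨p, hp⟩ => hη.1 p hp
  refine le_inf ?_ (le_principal_iff.2 hη.2)
  rw [← tendsto_iff_comap, ← Nat.cofinite_eq_atTop]
  exact (Tendsto.cofinite_of_finite_preimage_singleton hfin).mono_left hcof

section Boundary

variable {A} {η : Ultrafilter A.Total}

theorem permBar_permBar (hη : η ∈ A.bdY) (g h : Γ) :
    A.permBar g (A.permBar h η) = A.permBar (g * h) η := by
  rw [permBar, permBar, Ultrafilter.map_map]
  exact Ultrafilter.map_congr ((A.eventually_perm_mul g h).filter_mono (A.le_tailY_of_mem_bdY hη))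

theorem permBar_one (hη : η ∈ A.bdY) : A.permBar 1 η = η :=
  (Ultrafilter.map_congr (A.eventually_perm_one.filter_mono (A.le_tailY_of_mem_bdY hη))).trans
    η.map_id

theorem permBar_ne_self (hη : η ∈ A.bdY) {k : Γ} (hk : k ≠ 1) : A.permBar k η ≠ η := by
  choose c hc using fun i => have := A.finX i; (A.sigma i k).exists_fin_three_coloring
  refine Ultrafilter.map_ne_self_of_eventually_ne (fun p : A.Total => c p.1 p.2) ?_
  filter_upwards [(A.eventually_perm_ne hk).filter_mono (A.le_tailY_of_mem_bdY hη)]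
    with ⟨i, y⟩ hmove
  exact hc i y fun hfix => hmove (by rw [perm_mk, hfix])

theorem core_subset_bdY : A.core ⊆ A.bdY := fun η hη => by
  obtain ⟨ξ, hξ, rfl⟩ := Set.mem_iInter.1 hη 1
  rwa [permBar_one hξ]

theorem permBar_mem_core (hη : η ∈ A.core) (g : Γ) : A.permBar g η ∈ A.core :=
  Set.mem_iInter.2 fun h => by
    obtain ⟨ξ, hξ, rfl⟩ := Set.mem_iInter.1 hη (g⁻¹ * h)
    exact ⟨ξ, hξ, by rw [permBar_permBar hξ, mul_inv_cancel_left]⟩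

theorem permBar_injective_of_mem_core (hη : η ∈ A.core) :
    Function.Injective fun g => A.permBar g η := by
  intro g h hgh
  obtain ⟨ξ, hξ, rfl⟩ := Set.mem_iInter.1 hη g⁻¹
  simp only [permBar_permBar hξ, mul_inv_cancel, permBar_one hξ] at hgh
  by_contra hne
  exact permBar_ne_self hξ (fun h1 => hne (mul_inv_eq_one.1 h1).symm) hgh.symm

end Boundary

theorem tau_mk_cons_apply (a : ↥S × Bool) (l : List (↥S × Bool)) (p : A.Total) :
    A.tau (FreeGroup.mk (a :: l)) p =
      cond a.2 (A.perm a.1) (A.perm a.1)⁻¹ (A.tau (FreeGroup.mk l) p) := by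
  simp only [tau, FreeGroup.lift_mk, List.map_cons, List.prod_cons, Equiv.Perm.mul_apply]

theorem pihom_mk_cons (a : ↥S × Bool) (l : List (↥S × Bool)) :
    pihom S (FreeGroup.mk (a :: l)) =
      cond a.2 (a.1 : Γ) (a.1 : Γ)⁻¹ * pihom S (FreeGroup.mk l) := by
  simp only [pihom, FreeGroup.lift_mk, List.map_cons, List.prod_cons]

theorem eventually_tau_mk_eq (l : List (↥S × Bool)) :
    ∀ᶠ p in A.tailY, A.tau (FreeGroup.mk l) p = A.perm (pihom S (FreeGroup.mk l)) p := by
  induction l with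
  | nil => simpa [← FreeGroup.one_eq_mk] using A.eventually_perm_one.mono fun p h => h.symm
  | cons a l ih =>
    obtain ⟨⟨s, hs⟩, b⟩ := a
    set h := pihom S (FreeGroup.mk l)
    filter_upwards [ih, A.eventually_perm_mul s h, A.eventually_perm_mul s (s⁻¹ * h)]
      with p hp hmul hmul'
    rw [tau_mk_cons_apply, pihom_mk_cons, hp]
    cases b with
    | true => exact hmul
    | false =>
      dsimp only [cond_false]
      rw [Equiv.Perm.inv_eq_iff_eq, hmul', mul_inv_cancel_left]

theorem map_tau_mk_eq_permBar {η : Ultrafilter A.Total} (hη : η ∈ A.bdY)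
    (l : List (↥S × Bool)) :
    Ultrafilter.map (A.tau (FreeGroup.mk l)) η = A.permBar (pihom S (FreeGroup.mk l)) η :=
  Ultrafilter.map_congr ((A.eventually_tau_mk_eq l).filter_mono (A.le_tailY_of_mem_bdY hη))

theorem exists_word_of_walk {i : ℕ} {x y : A.X i} (w : (A.graph i).Walk x y) :
    ∃ l : List (↥S × Bool), l.length = w.length ∧ A.tau (FreeGroup.mk l) ⟨i, x⟩ = ⟨i, y⟩ := by
  induction w with
  | nil => exact ⟨[], rfl, by rw [← FreeGroup.one_eq_mk, map_one]; rfl⟩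
  | @cons u v _ hadj _ ih =>
    obtain ⟨l, hlen, hl⟩ := ih
    obtain ⟨-, s, hs, hsuv⟩ := hadj
    obtain ⟨b, hb⟩ : ∃ b : Bool,
        cond b (A.perm s) (A.perm s)⁻¹ (⟨i, u⟩ : A.Total) = ⟨i, v⟩ := by
      rcases hsuv with h | h
      · exact ⟨true, by rw [cond_true, perm_mk, h]⟩
      · exact ⟨false, by rw [cond_false, Equiv.Perm.inv_eq_iff_eq, perm_mk, h]⟩
    refine ⟨l ++ [(⟨s, hs⟩, b)], by rw [List.length_append, hlen]; rfl, ?_⟩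
    rw [← FreeGroup.mul_mk, map_mul, Equiv.Perm.mul_apply, tau_mk_cons_apply,
      ← FreeGroup.one_eq_mk, map_one, Equiv.Perm.one_apply, hb, hl]

section Metric

variable {A} {d : A.Total → A.Total → ℝ}

namespace Admissible

variable (hd : A.Admissible d)
include hd

-- `SimpleGraph.dist` is `0` between unreachable vertices, so `d` would vanish off the diagonal.
theorem graph_reachable (i : ℕ) (x y : A.X i) : (A.graph i).Reachable x y := by
  rcases eq_or_ne x y with rfl | hne
  · rfl
  refine SimpleGraph.Reachable.of_dist_ne_zero fun h0 => hne ?_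
  have : d ⟨i, x⟩ ⟨i, y⟩ = 0 := by rw [hd.2.2.2.2.1, h0, Nat.cast_zero]
  exact sigma_mk_injective ((hd.2.2.1 _ _).1 this)

theorem dist_perm_le_one {s : Γ} (hs : s ∈ S) (p : A.Total) : d p (A.perm s p) ≤ 1 := by
  obtain ⟨i, x⟩ := p
  rw [perm_mk, hd.2.2.2.2.1]
  by_cases hfix : x = A.sigma i s x
  · rw [← hfix, SimpleGraph.dist_self, Nat.cast_zero]
    exact zero_le_one
  · exact_mod_cast (SimpleGraph.dist_eq_one_iff_adj.2
      (show (A.graph i).Adj x (A.sigma i s x) from ⟨hfix, s, hs, Or.inl rfl⟩)).le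

theorem dist_tau_mk_le (l : List (↥S × Bool)) (p : A.Total) :
    d p (A.tau (FreeGroup.mk l) p) ≤ l.length := by
  induction l with
  | nil => simp [← FreeGroup.one_eq_mk, (hd.2.2.1 p p).2 rfl]
  | cons a l ih =>
    obtain ⟨⟨s, hs⟩, b⟩ := a
    set q := A.tau (FreeGroup.mk l) p
    have hstep : d q (cond b (A.perm s) (A.perm s)⁻¹ q) ≤ 1 := by
      cases b
      · simpa [hd.1 q] using hd.dist_perm_le_one hs ((A.perm s)⁻¹ q)
      · exact hd.dist_perm_le_one hs q
    rw [tau_mk_cons_apply, List.length_cons, Nat.cast_succ]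
    exact (hd.2.1 _ q _).trans (add_le_add ih hstep)

theorem eventually_exists_word (R : ℕ) :
    ∀ᶠ p in comap Sigma.fst atTop, ∀ q, d p q ≤ R →
      ∃ l : List (↥S × Bool), l.length ≤ R ∧ A.tau (FreeGroup.mk l) p = q := by
  obtain ⟨N, hN⟩ := hd.2.2.2.2.2 R
  filter_upwards [preimage_mem_comap (Ici_mem_atTop N)] with ⟨i, x⟩ hi ⟨j, y⟩ hxy
  obtain rfl : i = j := by
    by_contra hij
    exact (hN i j hij (le_add_right hi) x y).not_ge hxy
  rw [hd.2.2.2.2.1] at hxy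
  obtain ⟨w, hw⟩ := (hd.graph_reachable i x y).exists_walk_length_eq_dist
  obtain ⟨l, hl, hlw⟩ := A.exists_word_of_walk w
  exact ⟨l, by rw [hl, hw]; exact_mod_cast hxy, hlw⟩

end Admissible

theorem ER_eq_pureRel (R : ℝ) : A.ER d R = Ultrafilter.pureRel fun a b => d a b ≤ R := rfl

variable {η ζ : Ultrafilter A.Total}

theorem exists_permBar_eq_of_mem_closure_ER (hSsymm : ∀ s ∈ S, s⁻¹ ∈ S) (hd : A.Admissible d)
    (hη : η ∈ A.bdY) {n : ℕ} (h : (η, ζ) ∈ closure (A.ER d n)) :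
    ∃ g, wordLength S g ≤ n ∧ A.permBar g η = ζ := by
  have := (List.finite_length_le (↥S × Bool) n).to_subtype
  have hwords := (hd.eventually_exists_word n).filter_mono
    ((A.le_tailY_of_mem_bdY hη).trans inf_le_left)
  rw [ER_eq_pureRel] at h
  obtain ⟨⟨l, hl⟩, hmap⟩ := Ultrafilter.exists_map_eq_of_mem_closure_pureRel
    (fun l : {l : List (↥S × Bool) | l.length ≤ n} => A.tau (FreeGroup.mk l.1)) h
    (hwords.mono fun p hp q hq =>
      let ⟨l, hl, hlq⟩ := hp q hq
      ⟨⟨l, hl⟩, hlq⟩)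
  exact ⟨_, (wordLength_pihom_mk_le hSsymm l).trans hl,
    (A.map_tau_mk_eq_permBar hη l).symm.trans hmap⟩

theorem mem_closure_ER_permBar (hSsymm : ∀ s ∈ S, s⁻¹ ∈ S)
    (hSgen : Subgroup.closure (S : Set Γ) = ⊤) (hd : A.Admissible d) (hη : η ∈ A.bdY)
    {g : Γ} {n : ℕ} (hg : wordLength S g ≤ n) : (η, A.permBar g η) ∈ closure (A.ER d n) := by
  obtain ⟨l, hl, rfl⟩ := exists_mk_length_eq_wordLength hSsymm hSgen g
  rw [ER_eq_pureRel]
  refine Ultrafilter.map_mem_closure_pureRel ?_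
  filter_upwards [(A.eventually_tau_mk_eq l).filter_mono (A.le_tailY_of_mem_bdY hη)] with p hp
  rw [← hp]
  exact (hd.dist_tau_mk_le l p).trans (by rw [hl]; exact_mod_cast hg)

end Metric

end SoficApprox

open SoficApprox in
theorem entourage_core_eq_disjoint_union_sigma_diagonals_general
    {Γ : Type u} [Group Γ] {S : Finset Γ}
    (hSsymm : ∀ s ∈ S, s⁻¹ ∈ S)
    (hSgen : Subgroup.closure (S : Set Γ) = ⊤)
    (A : SoficApprox Γ S)
    (d : A.Total → A.Total → ℝ) (hd : A.Admissible d)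
    (n : ℕ) :
    (closure (A.ER d (n : ℝ)) ∩ (A.core ×ˢ A.core) =
      ⋃ g ∈ {g : Γ | wordLength S g ≤ n},
        {p : Ultrafilter A.Total × Ultrafilter A.Total |
          ∃ η ∈ A.core, p = (η, A.permBar g η)}) ∧
    (∀ g h : Γ, g ≠ h →
      Disjoint
        {p : Ultrafilter A.Total × Ultrafilter A.Total |
          ∃ η ∈ A.core, p = (η, A.permBar g η)}
        {p : Ultrafilter A.Total × Ultrafilter A.Total |
          ∃ η ∈ A.core, p = (η, A.permBar h η)}) := by
  refine ⟨Set.ext fun ⟨η, ζ⟩ => ⟨?_, ?_⟩, fun g h hgh => Set.disjoint_left.2 ?_⟩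
  · rintro ⟨hcl, hη, -⟩
    obtain ⟨g, hg, hgζ⟩ :=
      exists_permBar_eq_of_mem_closure_ER hSsymm hd (core_subset_bdY hη) hcl
    exact Set.mem_biUnion hg ⟨η, hη, by rw [hgζ]⟩
  · simp only [Set.mem_iUnion, Set.mem_ofPred_eq, Prod.mk.injEq, exists_prop]
    rintro ⟨g, hg, η, hη, rfl, rfl⟩
    exact ⟨mem_closure_ER_permBar hSsymm hSgen hd (core_subset_bdY hη) hg, hη,
      permBar_mem_core hη g⟩
  · rintro _ ⟨η, hη, rfl⟩ ⟨η', -, hη'⟩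
    obtain ⟨rfl, hgh'⟩ := Prod.mk.inj hη'
    exact hgh (permBar_injective_of_mem_core hη hgh')

open SoficApprox in
/-- **Decomposition of the entourages over the core.**
For every `n`, the part of `cl(E_n)` lying over the core decomposes as the union of the
`σ`-diagonals `{(η, σ̄(g)(η)) : η ∈ Z}` over group elements of word length at most `n`,
and these diagonals are pairwise disjoint for distinct `g`. -/
theorem entourage_core_eq_disjoint_union_sigma_diagonals
    {Γ : Type u} [Group Γ] {S : Finset Γ}
    (hSsymm : ∀ s ∈ S, s⁻¹ ∈ S)
    (hSgen : Subgroup.closure (S : Set Γ) = ⊤)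
    (A : SoficApprox Γ S)
    (hconn : ∀ i, (A.graph i).Connected)
    (d : A.Total → A.Total → ℝ) (hd : A.Admissible d)
    (n : ℕ) :
    (closure (A.ER d (n : ℝ)) ∩ (A.core ×ˢ A.core) =
      ⋃ g ∈ {g : Γ | wordLength S g ≤ n},
        {p : Ultrafilter A.Total × Ultrafilter A.Total |
          ∃ η ∈ A.core, p = (η, A.permBar g η)}) ∧
    (∀ g h : Γ, g ≠ h →
      Disjoint
        {p : Ultrafilter A.Total × Ultrafilter A.Total |
          ∃ η ∈ A.core, p = (η, A.permBar g η)}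
        {p : Ultrafilter A.Total × Ultrafilter A.Total |
          ∃ η ∈ A.core, p = (η, A.permBar h η)}) :=
  entourage_core_eq_disjoint_union_sigma_diagonals_general hSsymm hSgen A d hd n
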